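/- From estimation error to SPO+ risk gap: let (Ω, μ) be a probability space, let S ⊆ ℝ^d be a nonempty compact set with diameter D(S), let C : Ω → ℝ^d and ĉ, c⋆ : Ω → ℝ^d be measurable, and for each ω let w⋆(ω) ∈ S be a minimizer of ⟨C(ω), ·⟩ over S, used in all loss evaluations. Assume ω ↦ ℓ_S(ĉ(ω), C(ω)), ω ↦ ℓ_S(c⋆(ω), C(ω)), ω ↦ ‖ĉ(ω) − c⋆(ω)‖, and ω ↦ ‖ĉ(ω) − c⋆(ω)‖² are integrable. Then ∫ ℓ_S(ĉ(ω), C(ω)) dμ − ∫ ℓ_S(c⋆(ω), C(ω)) dμ ≤ 2 D(S) · ∫ ‖ĉ(ω) − c⋆(ω)‖ dμ ≤ 2 D(S) · √( ∫ ‖ĉ(ω) − c⋆(ω)‖² dμ ). -/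

import Mathlib

open scoped RealInnerProductSpace
open MeasureTheory

/-- Support function of a set `S ⊆ ℝ^d`. -/
noncomputable def supp {d : ℕ} (S : Set (EuclideanSpace ℝ (Fin d)))
    (u : EuclideanSpace ℝ (Fin d)) : ℝ :=
  sSup ((fun w => ⟪u, w⟫) '' S)

/-- Optimal value of the linear program over `S`. -/
noncomputable def zstar {d : ℕ} (S : Set (EuclideanSpace ℝ (Fin d)))
    (c : EuclideanSpace ℝ (Fin d)) : ℝ :=
  sInf ((fun w => ⟪c, w⟫) '' S)

/-- SPO+ loss with a chosen minimizer `w⋆` of `⟨c, ·⟩` over `S`. -/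
noncomputable def spoPlus {d : ℕ} (S : Set (EuclideanSpace ℝ (Fin d)))
    (chat c wstar : EuclideanSpace ℝ (Fin d)) : ℝ :=
  supp S (c - (2 : ℝ) • chat) + 2 * ⟪chat, wstar⟫ - zstar S c

/-!
The terms `z⋆_S(c)` cancel in the difference of the two losses. If `v ∈ S` attains the support
function at `c - 2ĉ`, then `ξ_S(c - 2ĉ) - ξ_S(c - 2c⋆) ≤ ⟨-2(ĉ - c⋆), v⟩`, so the pointwise loss gap
is at most `2⟨ĉ - c⋆, w⋆ - v⟩ ≤ 2 D(S) ‖ĉ - c⋆‖` by Cauchy–Schwarz. Integrating gives the first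
inequality, and the second is `(𝔼 X)² ≤ 𝔼 X²`, i.e. the nonnegativity of the variance.
-/

section SupportFunction

variable {d : ℕ} {S : Set (EuclideanSpace ℝ (Fin d))}

lemma inner_le_supp (hS : Bornology.IsBounded S) (u : EuclideanSpace ℝ (Fin d))
    {w : EuclideanSpace ℝ (Fin d)} (hw : w ∈ S) : ⟪u, w⟫ ≤ supp S u :=
  le_csSup ((innerSL ℝ u).lipschitz.isBounded_image hS).bddAbove ⟨w, hw, rfl⟩

lemma IsCompact.exists_mem_supp_eq (hS : IsCompact S) (hne : S.Nonempty)
    (u : EuclideanSpace ℝ (Fin d)) : ∃ v ∈ S, supp S u = ⟪u, v⟫ :=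
  hS.exists_sSup_image_eq hne (continuous_const.inner continuous_id).continuousOn

lemma inner_sub_le_norm_mul_diam (hS : Bornology.IsBounded S) (x : EuclideanSpace ℝ (Fin d))
    {w v : EuclideanSpace ℝ (Fin d)} (hw : w ∈ S) (hv : v ∈ S) :
    ⟪x, w - v⟫ ≤ ‖x‖ * Metric.diam S :=
  calc ⟪x, w - v⟫ ≤ ‖x‖ * ‖w - v‖ := real_inner_le_norm _ _
    _ ≤ ‖x‖ * Metric.diam S := by
      rw [← dist_eq_norm]
      gcongr
      exact Metric.dist_le_diam_of_mem hS hw hv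

lemma spoPlus_sub_spoPlus_le (hS : IsCompact S) (c chat cstar : EuclideanSpace ℝ (Fin d))
    {w : EuclideanSpace ℝ (Fin d)} (hw : w ∈ S) :
    spoPlus S chat c w - spoPlus S cstar c w ≤ 2 * Metric.diam S * ‖chat - cstar‖ := by
  obtain ⟨v, hv, hsupp⟩ := hS.exists_mem_supp_eq ⟨w, hw⟩ (c - (2 : ℝ) • chat)
  have hsupp_cstar := inner_le_supp hS.isBounded (c - (2 : ℝ) • cstar) hv
  have hdiam := inner_sub_le_norm_mul_diam hS.isBounded (chat - cstar) hw hv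
  calc spoPlus S chat c w - spoPlus S cstar c w
      = supp S (c - (2 : ℝ) • chat) - supp S (c - (2 : ℝ) • cstar) + 2 * ⟪chat - cstar, w⟫ := by
        simp only [spoPlus, inner_sub_left]
        ring
    _ ≤ ⟪c - (2 : ℝ) • chat, v⟫ - ⟪c - (2 : ℝ) • cstar, v⟫ + 2 * ⟪chat - cstar, w⟫ := by
        rw [hsupp]
        linarith
    _ = 2 * ⟪chat - cstar, w - v⟫ := by
        simp only [inner_sub_left, inner_sub_right, real_inner_smul_left]
        ring
    _ ≤ 2 * Metric.diam S * ‖chat - cstar‖ := by linarith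

end SupportFunction

section Integrals

variable {Ω : Type*} [MeasurableSpace Ω] {μ : Measure Ω}

lemma integral_sub_integral_le_mul_integral {f g h : Ω → ℝ} (hf : Integrable f μ)
    (hg : Integrable g μ) (hh : Integrable h μ) (K : ℝ) (hle : ∀ᵐ ω ∂μ, f ω - g ω ≤ K * h ω) :
    ∫ ω, f ω ∂μ - ∫ ω, g ω ∂μ ≤ K * ∫ ω, h ω ∂μ := by
  rw [← integral_sub hf hg, ← integral_const_mul]
  exact integral_mono_ae (hf.sub hg) (hh.const_mul K) hle

lemma integral_le_sqrt_integral_sq [IsProbabilityMeasure μ] {f : Ω → ℝ}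
    (hf : AEStronglyMeasurable f μ) (hf_sq : Integrable (fun ω => f ω ^ 2) μ) :
    ∫ ω, f ω ∂μ ≤ √(∫ ω, f ω ^ 2 ∂μ) := by
  have hvar := ProbabilityTheory.variance_eq_sub ((memLp_two_iff_integrable_sq hf).2 hf_sq)
  have := ProbabilityTheory.variance_nonneg f μ
  apply Real.le_sqrt_of_sq_le
  simp only [Pi.pow_apply] at hvar
  linarith

end Integrals

theorem estimation_to_spoPlus_risk_gap_general {d : ℕ}
    (Ω : Type*) [MeasurableSpace Ω] (μ : Measure Ω) [IsProbabilityMeasure μ]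
    (S : Set (EuclideanSpace ℝ (Fin d)))
    (hcomp : IsCompact S)
    (C chat cstar : Ω → EuclideanSpace ℝ (Fin d))
    (wstar : Ω → EuclideanSpace ℝ (Fin d))
    (hwmem : ∀ ω, wstar ω ∈ S)
    (hInt₁ : Integrable (fun ω => spoPlus S (chat ω) (C ω) (wstar ω)) μ)
    (hInt₂ : Integrable (fun ω => spoPlus S (cstar ω) (C ω) (wstar ω)) μ)
    (hInt₃ : Integrable (fun ω => ‖chat ω - cstar ω‖) μ)
    (hInt₄ : Integrable (fun ω => ‖chat ω - cstar ω‖ ^ 2) μ) :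
    ((∫ ω, spoPlus S (chat ω) (C ω) (wstar ω) ∂μ) -
        ∫ ω, spoPlus S (cstar ω) (C ω) (wstar ω) ∂μ ≤
      2 * Metric.diam S * ∫ ω, ‖chat ω - cstar ω‖ ∂μ) ∧
    (2 * Metric.diam S * ∫ ω, ‖chat ω - cstar ω‖ ∂μ ≤
      2 * Metric.diam S * Real.sqrt (∫ ω, ‖chat ω - cstar ω‖ ^ 2 ∂μ)) :=
  ⟨integral_sub_integral_le_mul_integral hInt₁ hInt₂ hInt₃ _ <| ae_of_all _ fun ω =>
      spoPlus_sub_spoPlus_le hcomp (C ω) (chat ω) (cstar ω) (hwmem ω),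
    mul_le_mul_of_nonneg_left (integral_le_sqrt_integral_sq hInt₃.aestronglyMeasurable hInt₄)
      (by positivity)⟩

/-- **From estimation error to SPO+ risk gap.**
The expected SPO+ risk gap between predictions `ĉ` and `c⋆` is bounded by
`2 D(S)` times the mean estimation error, which in turn is bounded by
`2 D(S)` times the root mean squared estimation error. -/
theorem estimation_to_spoPlus_risk_gap {d : ℕ}
    (Ω : Type*) [MeasurableSpace Ω] (μ : Measure Ω) [IsProbabilityMeasure μ]
    (S : Set (EuclideanSpace ℝ (Fin d)))
    (hne : S.Nonempty) (hcomp : IsCompact S)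
    (C chat cstar : Ω → EuclideanSpace ℝ (Fin d))
    (hC : Measurable C) (hchat : Measurable chat) (hcstar : Measurable cstar)
    (wstar : Ω → EuclideanSpace ℝ (Fin d))
    (hwmem : ∀ ω, wstar ω ∈ S)
    (hwmin : ∀ ω, ∀ w ∈ S, ⟪C ω, wstar ω⟫ ≤ ⟪C ω, w⟫)
    (hInt₁ : Integrable (fun ω => spoPlus S (chat ω) (C ω) (wstar ω)) μ)
    (hInt₂ : Integrable (fun ω => spoPlus S (cstar ω) (C ω) (wstar ω)) μ)
    (hInt₃ : Integrable (fun ω => ‖chat ω - cstar ω‖) μ)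
    (hInt₄ : Integrable (fun ω => ‖chat ω - cstar ω‖ ^ 2) μ) :
    ((∫ ω, spoPlus S (chat ω) (C ω) (wstar ω) ∂μ) -
        ∫ ω, spoPlus S (cstar ω) (C ω) (wstar ω) ∂μ ≤
      2 * Metric.diam S * ∫ ω, ‖chat ω - cstar ω‖ ∂μ) ∧
    (2 * Metric.diam S * ∫ ω, ‖chat ω - cstar ω‖ ∂μ ≤
      2 * Metric.diam S * Real.sqrt (∫ ω, ‖chat ω - cstar ω‖ ^ 2 ∂μ)) :=
  estimation_to_spoPlus_risk_gap_general Ω μ S hcomp C chat cstar wstar hwmem hInt₁ hInt₂ hInt₃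
    hInt₄
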